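/- Let f(λ) = (2π)^{−1/2} e^{−λ²/2} be the standard normal density and Φ(λ) = ∫_{−∞}^{λ} f(x) dx its cumulative distribution function. Then for all λ ≥ 0: f'(λ)/Φ(λ) − f(λ)²/Φ(λ)² > −0.95. -/

import Mathlib

open MeasureTheory

/-- The standard normal probability density `f(λ) = (2π)^{-1/2} e^{-λ²/2}`. -/
noncomputable def stdGaussDensity (x : ℝ) : ℝ :=
  (Real.sqrt (2 * Real.pi))⁻¹ * Real.exp (-x ^ 2 / 2)

/-- The standard normal cumulative distribution function. -/
noncomputable def normCdf (t : ℝ) : ℝ := ∫ x in Set.Iic t, stdGaussDensity x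

lemma stdGauss_eq : stdGaussDensity = fun x => (Real.sqrt (2 * Real.pi))⁻¹ *
    Real.exp (-(1/2) * x ^ 2) := by
  funext x
  simp only [stdGaussDensity]
  ring_nf

lemma stdGauss_integrable : Integrable stdGaussDensity := by
  rw [stdGauss_eq]
  exact (integrable_exp_neg_mul_sq (by norm_num : (0:ℝ) < 1/2)).const_mul _

lemma stdGauss_nonneg (x : ℝ) : 0 ≤ stdGaussDensity x := by
  unfold stdGaussDensity
  positivity

lemma stdGauss_total : ∫ x, stdGaussDensity x = 1 := by
  rw [stdGauss_eq]
  rw [integral_const_mul, integral_gaussian]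
  rw [show Real.pi / (1/2) = 2 * Real.pi by ring]
  exact inv_mul_cancel₀ (Real.sqrt_pos.mpr (by positivity)).ne'

lemma stdGauss_deriv (x : ℝ) : deriv stdGaussDensity x = -x * stdGaussDensity x := by
  have h : HasDerivAt (fun y : ℝ => (Real.sqrt (2 * Real.pi))⁻¹ * Real.exp (-y ^ 2 / 2))
      ((Real.sqrt (2 * Real.pi))⁻¹ * (Real.exp (-x ^ 2 / 2) * (-(2 * x ^ 1) / 2))) x := by
    exact (((hasDerivAt_pow 2 x).neg.div_const 2).exp).const_mul _
  have h2 : HasDerivAt stdGaussDensity (-x * stdGaussDensity x) x := by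
    have := h
    convert this using 1
    all_goals (unfold stdGaussDensity <;> ring)
  exact h2.deriv

lemma normCdf_zero : normCdf 0 = 1/2 := by
  have heven : ∀ x : ℝ, stdGaussDensity (-x) = stdGaussDensity x := by
    intro x; unfold stdGaussDensity; rw [neg_pow]; norm_num
  have h1 : normCdf 0 + ∫ x in Set.Ioi (0:ℝ), stdGaussDensity x = 1 := by
    rw [normCdf, intervalIntegral.integral_Iic_add_Ioi stdGauss_integrable.integrableOn
      stdGauss_integrable.integrableOn, stdGauss_total]
  have h2 : (∫ x in Set.Ioi (0:ℝ), stdGaussDensity x) = normCdf 0 := by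
    rw [normCdf]
    have := integral_comp_neg_Iic (0:ℝ) stdGaussDensity
    simp only [neg_zero] at this
    rw [← this]
    congr 1
    funext x
    rw [heven]
  rw [h2] at h1
  linarith

lemma normCdf_ge_half {lam : ℝ} (hlam : 0 ≤ lam) : 1/2 ≤ normCdf lam := by
  rw [← normCdf_zero]
  unfold normCdf
  apply setIntegral_mono_set stdGauss_integrable.integrableOn
  · exact Filter.Eventually.of_forall (fun x => stdGauss_nonneg x)
  · exact Filter.Eventually.of_forall (fun x hx => le_trans hx hlam)

lemma cube_le_exp {x : ℝ} (hx : 0 ≤ x) : (1 + x/3)^3 ≤ Real.exp x := by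
  have h1 : 1 + x/3 ≤ Real.exp (x/3) := by
    have := Real.add_one_le_exp (x/3); linarith
  calc (1 + x/3)^3 ≤ (Real.exp (x/3))^3 := by
        apply pow_le_pow_left₀ (by positivity) h1
    _ = Real.exp x := by
        rw [← Real.exp_nat_mul]; congr 1; push_cast; ring

lemma exp_neg_le {x : ℝ} (hx : 0 ≤ x) : Real.exp (-x) ≤ ((1 + x/3)^3)⁻¹ := by
  rw [Real.exp_neg]
  apply inv_anti₀ (by positivity) (cube_le_exp hx)

lemma sqrt_two_pi_ge : (2.506 : ℝ) ≤ Real.sqrt (2 * Real.pi) := by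
  have h : (2.506 : ℝ) = Real.sqrt (2.506^2) := by
    rw [Real.sqrt_sq]; norm_num
  rw [h]
  apply Real.sqrt_le_sqrt
  nlinarith [Real.pi_gt_d6]

/-- For `a ≤ lam`: `stdGaussDensity lam ≤ (2.506 * (1 + a²/6)³)⁻¹`. -/
lemma stdGauss_le {a lam : ℝ} (ha : 0 ≤ a) (h : a ≤ lam) :
    stdGaussDensity lam ≤ (2.506 * (1 + a^2/6)^3)⁻¹ := by
  unfold stdGaussDensity
  have h1 : Real.exp (-lam ^ 2 / 2) ≤ ((1 + a^2/6)^3)⁻¹ := by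
    calc Real.exp (-lam ^ 2 / 2) ≤ Real.exp (-(a^2/2)) := by
          apply Real.exp_le_exp.mpr; nlinarith
      _ ≤ ((1 + (a^2/2)/3)^3)⁻¹ := exp_neg_le (by positivity)
      _ = ((1 + a^2/6)^3)⁻¹ := by ring_nf
  have h2 : (Real.sqrt (2 * Real.pi))⁻¹ ≤ (2.506:ℝ)⁻¹ := by
    apply inv_anti₀ (by norm_num) sqrt_two_pi_ge
  have h3 : (0:ℝ) < (2.506:ℝ)⁻¹ := by norm_num
  calc (Real.sqrt (2 * Real.pi))⁻¹ * Real.exp (-lam ^ 2 / 2)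
      ≤ (2.506:ℝ)⁻¹ * ((1 + a^2/6)^3)⁻¹ := by
        apply mul_le_mul h2 h1 (Real.exp_nonneg _) (le_of_lt h3)
    _ = (2.506 * (1 + a^2/6)^3)⁻¹ := by rw [mul_inv]

lemma lam_exp_le {lam : ℝ} (hlam : 0 ≤ lam) :
    lam * Real.exp (-lam ^ 2 / 2) ≤ Real.exp (-(1:ℝ)/2) := by
  rcases eq_or_lt_of_le hlam with h | h
  · rw [← h]; simp [Real.exp_nonneg]
  · have hlog : Real.log lam ≤ (lam^2 - 1)/2 := by
      have h1 := Real.log_le_sub_one_of_pos h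
      nlinarith [sq_nonneg (lam - 1)]
    have h2 : lam ≤ Real.exp ((lam^2 - 1)/2) := by
      calc lam = Real.exp (Real.log lam) := (Real.exp_log h).symm
        _ ≤ Real.exp ((lam^2 - 1)/2) := Real.exp_le_exp.mpr hlog
    calc lam * Real.exp (-lam ^ 2 / 2)
        ≤ Real.exp ((lam^2 - 1)/2) * Real.exp (-lam ^ 2 / 2) := by
          apply mul_le_mul_of_nonneg_right h2 (Real.exp_nonneg _)
      _ = Real.exp (-(1:ℝ)/2) := by rw [← Real.exp_add]; ring_nf
    
lemma key_bound {lam : ℝ} (hlam : 0 ≤ lam) :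
    2 * lam * stdGaussDensity lam + 4 * (stdGaussDensity lam)^2 < 0.95 := by
  have hF0 : 0 ≤ stdGaussDensity lam := stdGauss_nonneg lam
  rcases le_or_gt lam 0.15 with h | h
  · have hF := stdGauss_le le_rfl hlam
    norm_num at hF ⊢
    nlinarith
  rcases le_or_gt lam 0.3 with h2 | h2
  · have hF := stdGauss_le (by norm_num : (0:ℝ) ≤ 0.15) h.le
    norm_num at hF ⊢
    nlinarith
  rcases le_or_gt lam 0.4 with h3 | h3
  · have hF := stdGauss_le (by norm_num : (0:ℝ) ≤ 0.3) h2.le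
    norm_num at hF ⊢
    nlinarith
  rcases le_or_gt lam 0.5 with h4 | h4
  · have hF := stdGauss_le (by norm_num : (0:ℝ) ≤ 0.4) h3.le
    norm_num at hF ⊢
    nlinarith
  rcases le_or_gt lam 0.6 with h5 | h5
  · have hF := stdGauss_le (by norm_num : (0:ℝ) ≤ 0.5) h4.le
    norm_num at hF ⊢
    nlinarith
  rcases le_or_gt lam 0.7 with h6 | h6
  · have hF := stdGauss_le (by norm_num : (0:ℝ) ≤ 0.6) h5.le
    norm_num at hF ⊢
    nlinarith
  · -- tail : lam ≥ 0.7
    have hF := stdGauss_le (by norm_num : (0:ℝ) ≤ 0.7) h6.le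
    have hlamF : lam * stdGaussDensity lam ≤ (216/343) * (2.506:ℝ)⁻¹ := by
      unfold stdGaussDensity
      have h1 : (Real.sqrt (2 * Real.pi))⁻¹ ≤ (2.506:ℝ)⁻¹ :=
        inv_anti₀ (by norm_num) sqrt_two_pi_ge
      have h2 : lam * Real.exp (-lam ^ 2 / 2) ≤ 216/343 := by
        calc lam * Real.exp (-lam ^ 2 / 2) ≤ Real.exp (-(1:ℝ)/2) := lam_exp_le hlam
          _ ≤ ((1 + (1/2:ℝ)/3)^3)⁻¹ := by
              have := exp_neg_le (by norm_num : (0:ℝ) ≤ 1/2)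
              convert this using 2; norm_num
          _ = 216/343 := by norm_num
      have h3 : (0:ℝ) ≤ Real.sqrt (2 * Real.pi) := Real.sqrt_nonneg _
      calc lam * ((Real.sqrt (2 * Real.pi))⁻¹ * Real.exp (-lam ^ 2 / 2))
          = (Real.sqrt (2 * Real.pi))⁻¹ * (lam * Real.exp (-lam ^ 2 / 2)) := by ring
        _ ≤ (2.506:ℝ)⁻¹ * (216/343) := by
            apply mul_le_mul h1 h2 (by positivity) (by norm_num)
        _ = (216/343) * (2.506:ℝ)⁻¹ := by ring
    norm_num at hF hlamF ⊢
    nlinarith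

theorem stmt18 (lam : ℝ) (hlam : 0 ≤ lam) :
    -0.95 < deriv stdGaussDensity lam / normCdf lam -
      (stdGaussDensity lam) ^ 2 / (normCdf lam) ^ 2 := by
  have hF : 0 ≤ stdGaussDensity lam := stdGauss_nonneg lam
  have hC : 1/2 ≤ normCdf lam := normCdf_ge_half hlam
  have hC0 : 0 < normCdf lam := by linarith
  rw [stdGauss_deriv]
  have h1 : (-lam * stdGaussDensity lam) / normCdf lam ≥ -(2 * lam * stdGaussDensity lam) := by
    rw [ge_iff_le, le_div_iff₀ hC0]
    nlinarith [mul_nonneg (mul_nonneg hlam hF) (by linarith : (0:ℝ) ≤ 2 * normCdf lam - 1)]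
  have h2 : (stdGaussDensity lam)^2 / (normCdf lam)^2 ≤ 4 * (stdGaussDensity lam)^2 := by
    rw [div_le_iff₀ (by positivity)]
    nlinarith [mul_nonneg (sq_nonneg (stdGaussDensity lam))
      (by nlinarith : (0:ℝ) ≤ 4 * (normCdf lam)^2 - 1)]
  have h3 := key_bound hlam
  nlinarith [h1, h2, h3]
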